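/- (Intertwining identity behind the Remark.) Let D ⊆ ℂ be open, let A, F, F⁺, ω̂_{F,F⁺}, Λ : D → Matrix (Fin N) (Fin N) ℂ be real-differentiable, and assume on D: (i) ∂_z̄ F + A·F = 0; (ii) ∂_z̄ ω̂_{F,F⁺} = F⁺·F; (iii) ω̂_{F,F⁺}(z) is invertible for every z ∈ D; (iv) ∂_z̄ Λ = Λ·A + F⁺. Define g = 1 − F · ω̂_{F,F⁺}⁻¹ · Λ and Ã = A + F · ω̂_{F,F⁺}⁻¹ · F⁺. Then g satisfies the intertwining equation ∂_z̄ g + Ã·g − g·A = 0 on D; in particular, wherever g is invertible the transformation A → Ã of Proposition 1 is the gauge transformation Ã = g·A·g⁻¹ − (∂_z̄ g)·g⁻¹. -/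

import Mathlib

open Complex Matrix

/-- Entrywise Wirtinger derivative ∂_z f = (1/2)(∂f/∂x − i ∂f/∂y). -/
noncomputable def wDz {N : ℕ} (f : ℂ → Matrix (Fin N) (Fin N) ℂ) (z : ℂ) :
    Matrix (Fin N) (Fin N) ℂ :=
  Matrix.of fun i j =>
    (1 / 2 : ℂ) * (fderiv ℝ (fun w => f w i j) z 1
      - Complex.I * fderiv ℝ (fun w => f w i j) z Complex.I)

/-- Entrywise Wirtinger derivative ∂_z̄ f = (1/2)(∂f/∂x + i ∂f/∂y). -/
noncomputable def wDzbar {N : ℕ} (f : ℂ → Matrix (Fin N) (Fin N) ℂ) (z : ℂ) :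
    Matrix (Fin N) (Fin N) ℂ :=
  Matrix.of fun i j =>
    (1 / 2 : ℂ) * (fderiv ℝ (fun w => f w i j) z 1
      + Complex.I * fderiv ℝ (fun w => f w i j) z Complex.I)

/-- Real-differentiability, entrywise, at every point of `D`. -/
def MatDiffOn {N : ℕ} (f : ℂ → Matrix (Fin N) (Fin N) ℂ) (D : Set ℂ) : Prop :=
  ∀ z ∈ D, ∀ i j, DifferentiableAt ℝ (fun w => f w i j) z

/-- Entrywise complex conjugate of a matrix. -/
def mconj {N : ℕ} (M : Matrix (Fin N) (Fin N) ℂ) : Matrix (Fin N) (Fin N) ℂ :=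
  M.map (starRingEnd ℂ)

/-!
Differentiating `g = 1 − F ω⁻¹ Λ` by the Leibniz rule, with `∂_z̄ (ω⁻¹) = −ω⁻¹ (∂_z̄ ω) ω⁻¹`,
and substituting `∂_z̄ F = −A F`, `∂_z̄ ω = F⁺ F`, `∂_z̄ Λ = Λ A + F⁺`, every term of
`∂_z̄ g + Ã g − g A` cancels against another one. Multiplying the intertwining equation on
the right by `g⁻¹` gives the gauge formula.
-/

section Scalar

noncomputable def dzbar (f : ℂ → ℂ) (z : ℂ) : ℂ :=
  (1 / 2 : ℂ) * (fderiv ℝ f z 1 + I * fderiv ℝ f z I)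

variable {f g : ℂ → ℂ} {z : ℂ}

lemma dzbar_congr (h : f =ᶠ[nhds z] g) : dzbar f z = dzbar g z := by
  rw [dzbar, dzbar, h.fderiv_eq]

lemma dzbar_const (c : ℂ) : dzbar (fun _ => c) z = 0 := by
  simp [dzbar]

lemma dzbar_const_sub (c : ℂ) : dzbar (fun w => c - f w) z = -dzbar f z := by
  simp only [dzbar, fderiv_const_sub, _root_.neg_apply]
  ring

lemma dzbar_mul (hf : DifferentiableAt ℝ f z) (hg : DifferentiableAt ℝ g z) :
    dzbar (fun w => f w * g w) z = dzbar f z * g z + f z * dzbar g z := by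
  simp only [dzbar, fderiv_fun_mul hf hg, _root_.add_apply, _root_.smul_apply, smul_eq_mul]
  ring

lemma dzbar_sum {ι : Type*} (s : Finset ι) {f : ι → ℂ → ℂ}
    (h : ∀ i ∈ s, DifferentiableAt ℝ (f i) z) :
    dzbar (fun w => ∑ i ∈ s, f i w) z = ∑ i ∈ s, dzbar (f i) z := by
  simp only [dzbar, fderiv_fun_sum h, _root_.sum_apply, Finset.mul_sum,
    ← Finset.sum_add_distrib]

end Scalar

section MatrixValued

variable {n : Type*} [Fintype n]

def MatDiffAt (f : ℂ → Matrix n n ℂ) (z : ℂ) : Prop :=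
  ∀ i j, DifferentiableAt ℝ (fun w => f w i j) z

variable {f g : ℂ → Matrix n n ℂ} {z : ℂ}

lemma MatDiffAt.mul (hf : MatDiffAt f z) (hg : MatDiffAt g z) :
    MatDiffAt (fun w => f w * g w) z := fun i j => by
  simp only [Matrix.mul_apply]
  exact DifferentiableAt.fun_sum fun k _ => (hf i k).mul (hg k j)

lemma MatDiffAt.det [DecidableEq n] (hf : MatDiffAt f z) :
    DifferentiableAt ℝ (fun w => (f w).det) z := by
  simp only [Matrix.det_apply']
  exact DifferentiableAt.fun_sum fun σ _ => .const_mul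
    (HasFDerivAt.finsetProd fun i _ => (hf (σ i) i).hasFDerivAt).differentiableAt _

lemma MatDiffAt.inv [DecidableEq n] (hf : MatDiffAt f z) (hz : IsUnit (f z)) :
    MatDiffAt (fun w => (f w)⁻¹) z := fun i j => by
  have hdet : (f z).det ≠ 0 := ((Matrix.isUnit_iff_isUnit_det _).mp hz).ne_zero
  simp only [Matrix.inv_def, Matrix.smul_apply, smul_eq_mul, Ring.inverse_eq_inv',
    Matrix.adjugate_apply]
  refine (hf.det.inv hdet).mul (MatDiffAt.det fun i' j' => ?_)
  by_cases hi' : i' = j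
  · simp [Matrix.updateRow_apply, hi']
  · simpa [Matrix.updateRow_apply, hi'] using hf i' j'

variable {N : ℕ} {f g : ℂ → Matrix (Fin N) (Fin N) ℂ}

lemma wDzbar_apply (f : ℂ → Matrix (Fin N) (Fin N) ℂ) (z : ℂ) (i j : Fin N) :
    wDzbar f z i j = dzbar (fun w => f w i j) z := rfl

lemma wDzbar_congr (h : f =ᶠ[nhds z] g) : wDzbar f z = wDzbar g z := by
  ext i j
  exact dzbar_congr (h.mono fun w hw => congrFun (congrFun hw i) j)

lemma wDzbar_const (c : Matrix (Fin N) (Fin N) ℂ) : wDzbar (fun _ => c) z = 0 := by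
  ext i j
  exact dzbar_const _

lemma wDzbar_const_sub (c : Matrix (Fin N) (Fin N) ℂ) :
    wDzbar (fun w => c - f w) z = -wDzbar f z := by
  ext i j
  exact dzbar_const_sub _

lemma wDzbar_mul (hf : MatDiffAt f z) (hg : MatDiffAt g z) :
    wDzbar (fun w => f w * g w) z = wDzbar f z * g z + f z * wDzbar g z := by
  ext i j
  simp only [wDzbar_apply, Matrix.mul_apply, Matrix.add_apply]
  rw [dzbar_sum (f := fun k w => f w i k * g w k j) _ fun k _ => (hf i k).mul (hg k j),
    ← Finset.sum_add_distrib]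
  exact Finset.sum_congr rfl fun k _ => dzbar_mul (hf i k) (hg k j)

lemma wDzbar_inv (hf : MatDiffAt f z) (hz : IsUnit (f z)) :
    wDzbar (fun w => (f w)⁻¹) z = -((f z)⁻¹ * wDzbar f z * (f z)⁻¹) := by
  have hdet : IsUnit (f z).det := (Matrix.isUnit_iff_isUnit_det _).mp hz
  have hinv : (fun w => f w * (f w)⁻¹) =ᶠ[nhds z] fun _ => 1 := by
    filter_upwards [hf.det.continuousAt.eventually_ne hdet.ne_zero] with w hw
    exact Matrix.mul_nonsing_inv _ (isUnit_iff_ne_zero.mpr hw)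
  have hprod : wDzbar f z * (f z)⁻¹ + f z * wDzbar (fun w => (f w)⁻¹) z = 0 := by
    rw [← wDzbar_mul hf (hf.inv hz), wDzbar_congr hinv, wDzbar_const]
  rw [← Matrix.nonsing_inv_mul_cancel_left (f z) (wDzbar (fun w => (f w)⁻¹) z) hdet,
    eq_neg_of_add_eq_zero_right hprod]
  noncomm_ring

lemma intertwining_identity_at {A F Fp ω Λ : ℂ → Matrix (Fin N) (Fin N) ℂ} {z : ℂ}
    (hF : MatDiffAt F z) (hω : MatDiffAt ω z) (hΛ : MatDiffAt Λ z)
    (hFz : wDzbar F z + A z * F z = 0) (hωz : wDzbar ω z = Fp z * F z)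
    (hωu : IsUnit (ω z)) (hΛz : wDzbar Λ z = Λ z * A z + Fp z) :
    wDzbar (fun w => 1 - F w * (ω w)⁻¹ * Λ w) z
      + (A z + F z * (ω z)⁻¹ * Fp z) * (1 - F z * (ω z)⁻¹ * Λ z)
      - (1 - F z * (ω z)⁻¹ * Λ z) * A z = 0 := by
  have hFω := hF.mul (hω.inv hωu)
  rw [wDzbar_const_sub, wDzbar_mul hFω hΛ, wDzbar_mul hF (hω.inv hωu), wDzbar_inv hω hωu,
    eq_neg_of_add_eq_zero_left hFz, hωz, hΛz]
  noncomm_ring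

end MatrixValued

lemma gauge_eq_of_intertwining {n : Type*} [Fintype n] [DecidableEq n] {R : Type*} [CommRing R]
    {d a a' g : Matrix n n R}
    (h : d + a' * g - g * a = 0) (hg : IsUnit g) : a' = g * a * g⁻¹ - d * g⁻¹ := by
  rw [← Matrix.mul_nonsing_inv_cancel_right g a' ((Matrix.isUnit_iff_isUnit_det _).mp hg),
    ← sub_mul, eq_sub_of_add_eq' (sub_eq_zero.mp h)]

theorem intertwining_identity_general {N : ℕ} (D : Set ℂ)
    (A F Fp ωFF Λ : ℂ → Matrix (Fin N) (Fin N) ℂ)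
    (hF : MatDiffOn F D)
    (hωFF : MatDiffOn ωFF D) (hΛ : MatDiffOn Λ D)
    (hFsys : ∀ z ∈ D, wDzbar F z + A z * F z = 0)
    (hωFFzbar : ∀ z ∈ D, wDzbar ωFF z = Fp z * F z)
    (hinv : ∀ z ∈ D, IsUnit (ωFF z))
    (hΛsys : ∀ z ∈ D, wDzbar Λ z = Λ z * A z + Fp z) :
    (∀ z ∈ D,
        wDzbar (fun w => 1 - F w * (ωFF w)⁻¹ * Λ w) z
          + (A z + F z * (ωFF z)⁻¹ * Fp z) * (1 - F z * (ωFF z)⁻¹ * Λ z)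
          - (1 - F z * (ωFF z)⁻¹ * Λ z) * A z = 0)
      ∧ ∀ z ∈ D, IsUnit (1 - F z * (ωFF z)⁻¹ * Λ z) →
          A z + F z * (ωFF z)⁻¹ * Fp z
            = (1 - F z * (ωFF z)⁻¹ * Λ z) * A z * (1 - F z * (ωFF z)⁻¹ * Λ z)⁻¹
              - wDzbar (fun w => 1 - F w * (ωFF w)⁻¹ * Λ w) z
                * (1 - F z * (ωFF z)⁻¹ * Λ z)⁻¹ := by
  have key : ∀ z ∈ D, _ := fun z hz =>
    intertwining_identity_at (hF z hz) (hωFF z hz) (hΛ z hz) (hFsys z hz) (hωFFzbar z hz) (hinv z hz)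
      (hΛsys z hz)
  exact ⟨key, fun z hz hg => gauge_eq_of_intertwining (key z hz) hg⟩

/-- intertwining identity: g = 1 − F·ω̂_{F,F⁺}⁻¹·Λ satisfies
∂_z̄ g + Ã·g − g·A = 0, where Ã = A + F·ω̂_{F,F⁺}⁻¹·F⁺; in particular, wherever g
is invertible, Ã = g·A·g⁻¹ − (∂_z̄ g)·g⁻¹. -/
theorem intertwining_identity {N : ℕ} (D : Set ℂ) (hD : IsOpen D)
    (A F Fp ωFF Λ : ℂ → Matrix (Fin N) (Fin N) ℂ)
    (hA : MatDiffOn A D) (hF : MatDiffOn F D) (hFp : MatDiffOn Fp D)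
    (hωFF : MatDiffOn ωFF D) (hΛ : MatDiffOn Λ D)
    (hFsys : ∀ z ∈ D, wDzbar F z + A z * F z = 0)
    (hωFFzbar : ∀ z ∈ D, wDzbar ωFF z = Fp z * F z)
    (hinv : ∀ z ∈ D, IsUnit (ωFF z))
    (hΛsys : ∀ z ∈ D, wDzbar Λ z = Λ z * A z + Fp z) :
    (∀ z ∈ D,
        wDzbar (fun w => 1 - F w * (ωFF w)⁻¹ * Λ w) z
          + (A z + F z * (ωFF z)⁻¹ * Fp z) * (1 - F z * (ωFF z)⁻¹ * Λ z)
          - (1 - F z * (ωFF z)⁻¹ * Λ z) * A z = 0)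
      ∧ ∀ z ∈ D, IsUnit (1 - F z * (ωFF z)⁻¹ * Λ z) →
          A z + F z * (ωFF z)⁻¹ * Fp z
            = (1 - F z * (ωFF z)⁻¹ * Λ z) * A z * (1 - F z * (ωFF z)⁻¹ * Λ z)⁻¹
              - wDzbar (fun w => 1 - F w * (ωFF w)⁻¹ * Λ w) z
                * (1 - F z * (ωFF z)⁻¹ * Λ z)⁻¹ :=
  intertwining_identity_general D A F Fp ωFF Λ hF hωFF hΛ hFsys hωFFzbar hinv hΛsys
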